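/- arXiv:2204.10536 — 3 statements merged into one kernel-verified Lean document; each statement's English description precedes it below -/
import Mathlib

section
/- Let ℓ be a loss with 0 ≤ ℓ ≤ M. If the algorithm A is γ-uniformly stable (i.e. |ℓ(z, A(S)) - ℓ(z, A(S^{(i)}))| ≤ γ for all datasets differing in one element), then with g_i = E_{z_i'}[ℓ(z_i, A(S^{(i)})) - E_z ℓ(z, A(S^{(i)}))], it holds that |n(R_n(A(S)) - R(A(S))) - Σ_{i=1}^n g_i| ≤ 2γn. -/
open MeasureTheory

theorem stmt_16 {p n : ℕ} {Z : Type*} [MeasurableSpace Z] (hn : 0 < n)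
    (D : Measure Z) [IsProbabilityMeasure D]
    (ℓ : Z → EuclideanSpace ℝ (Fin p) → ℝ) (M γ : ℝ) (hM : 0 ≤ M) (hγ : 0 ≤ γ)
    (hbound : ∀ z θ, 0 ≤ ℓ z θ ∧ ℓ z θ ≤ M)
    (A : (Fin n → Z) → EuclideanSpace ℝ (Fin p))
    (hstable : ∀ S S' : Fin n → Z, (∃ j, ∀ i, i ≠ j → S i = S' i) →
      ∀ z, |ℓ z (A S) - ℓ z (A S')| ≤ γ)
    (S : Fin n → Z)
    (hint1 : ∀ θ, Integrable (fun z => ℓ z θ) D)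
    (hint2 : ∀ i : Fin n, Integrable
      (fun z' => ℓ (S i) (A (Function.update S i z'))
        - ∫ z, ℓ z (A (Function.update S i z')) ∂D) D)
    (g : Fin n → ℝ)
    (hg : ∀ i, g i = ∫ z', (ℓ (S i) (A (Function.update S i z'))
        - ∫ z, ℓ z (A (Function.update S i z')) ∂D) ∂D)
    (Rn R : ℝ)
    (hRn : Rn = (1 / (n : ℝ)) * ∑ i, ℓ (S i) (A S))
    (hR : R = ∫ z, ℓ z (A S) ∂D) :
    |(n : ℝ) * (Rn - R) - ∑ i, g i| ≤ 2 * γ * n := by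
  have hn' : (n : ℝ) ≠ 0 := Nat.cast_ne_zero.mpr hn.ne'
  have key : ∀ i : Fin n, |ℓ (S i) (A S) - R - g i| ≤ 2 * γ := by
    intro i
    rw [hg i]
    have hconst : ℓ (S i) (A S) - R = ∫ _z', (ℓ (S i) (A S) - R) ∂D := by
      simp
    rw [hconst, ← integral_sub (integrable_const _) (hint2 i)]
    have hptw : ∀ z', |(ℓ (S i) (A S) - R) -
        (ℓ (S i) (A (Function.update S i z'))
          - ∫ z, ℓ z (A (Function.update S i z')) ∂D)| ≤ 2 * γ := by
      intro z'
      have hd : ∃ j, ∀ k, k ≠ j → S k = (Function.update S i z') k :=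
        ⟨i, fun k hk => (Function.update_of_ne hk _ _).symm⟩
      have h1 : |ℓ (S i) (A S) - ℓ (S i) (A (Function.update S i z'))| ≤ γ :=
        hstable S (Function.update S i z') hd (S i)
      have h2 : |(∫ z, ℓ z (A (Function.update S i z')) ∂D) - R| ≤ γ := by
        rw [hR, ← integral_sub (hint1 _) (hint1 _)]
        calc |∫ z, (ℓ z (A (Function.update S i z')) - ℓ z (A S)) ∂D|
            ≤ ∫ z, |ℓ z (A (Function.update S i z')) - ℓ z (A S)| ∂D := by
              simpa only [Real.norm_eq_abs] using norm_integral_le_integral_norm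
                (μ := D) (fun z => ℓ z (A (Function.update S i z')) - ℓ z (A S))
          _ ≤ ∫ _z, γ ∂D := by
              apply integral_mono ((hint1 _).sub (hint1 _)).abs (integrable_const _)
              intro z
              simp only [Pi.sub_apply]
              rw [abs_sub_comm]
              exact hstable S (Function.update S i z') hd z
          _ = γ := by simp
      calc |(ℓ (S i) (A S) - R) -
          (ℓ (S i) (A (Function.update S i z'))
            - ∫ z, ℓ z (A (Function.update S i z')) ∂D)|
          = |(ℓ (S i) (A S) - ℓ (S i) (A (Function.update S i z'))) +
             ((∫ z, ℓ z (A (Function.update S i z')) ∂D) - R)| := by ring_nf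
        _ ≤ _ + _ := abs_add_le _ _
        _ ≤ γ + γ := add_le_add h1 h2
        _ = 2 * γ := by ring
    calc |∫ z', ((ℓ (S i) (A S) - R) -
        (ℓ (S i) (A (Function.update S i z'))
          - ∫ z, ℓ z (A (Function.update S i z')) ∂D)) ∂D|
        ≤ ∫ z', |(ℓ (S i) (A S) - R) -
            (ℓ (S i) (A (Function.update S i z'))
              - ∫ z, ℓ z (A (Function.update S i z')) ∂D)| ∂D := by
          simpa only [Real.norm_eq_abs] using norm_integral_le_integral_norm
            (μ := D) (fun z' => (ℓ (S i) (A S) - R) -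
              (ℓ (S i) (A (Function.update S i z'))
                - ∫ z, ℓ z (A (Function.update S i z')) ∂D))
      _ ≤ ∫ _z', (2 * γ) ∂D := by
          apply integral_mono ((integrable_const _).sub (hint2 i)).abs
            (integrable_const _)
          exact hptw
      _ = 2 * γ := by simp
  have hsplit : (n : ℝ) * (Rn - R) - ∑ i, g i
      = ∑ i, (ℓ (S i) (A S) - R - g i) := by
    rw [hRn]
    rw [Finset.sum_sub_distrib, Finset.sum_sub_distrib, Finset.sum_const,
      Finset.card_univ, Fintype.card_fin, nsmul_eq_mul]
    field_simp
  rw [hsplit]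
  calc |∑ i, (ℓ (S i) (A S) - R - g i)|
      ≤ ∑ i, |ℓ (S i) (A S) - R - g i| := Finset.abs_sum_le_sum_abs _ _
    _ ≤ ∑ _i : Fin n, (2 * γ) := Finset.sum_le_sum fun i _ => key i
    _ = 2 * γ * n := by simp [mul_comm]
end

section
/- Suppose f: R^p -> R is α-Hölder smooth with the descent inequality f(θ₁) - f(θ₂) ≤ ⟨∇f(θ₂),θ₁-θ₂⟩ + (H/(α+1))||θ₁-θ₂||^{α+1}, satisfies PL with parameter 2μ, and has gradient bounded by G'. For the step θ_{t+1} = θ_t - η_t(∇f(θ_t) + b) with η_t ≤ (1/H)^{1/α}, one has f(θ_{t+1}) - f(θ_t) ≤ -(η_t/4)||∇f(θ_t)||² - μη_t(f(θ_t) - f(θ*)) + (Hη_t^{α+1}(1-α))/(2(α+1)) + η_t G'||b|| + (η_t/2)||b||². -/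
open RealInnerProductSpace

theorem stmt_18 {p : ℕ} (f : EuclideanSpace ℝ (Fin p) → ℝ) (α H μ G' : ℝ)
    (hα : 0 < α) (hα1 : α ≤ 1) (hH : 0 < H) (hμ : 0 < μ) (hG' : 0 ≤ G')
    (hdiff : ∀ x, DifferentiableAt ℝ f x)
    (θs : EuclideanSpace ℝ (Fin p)) (hmin : ∀ θ, f θs ≤ f θ)
    (hPL : ∀ θ, ‖gradient f θ‖ ^ 2 ≥ 4 * μ * (f θ - f θs))
    (hgrad : ∀ θ, ‖gradient f θ‖ ≤ G')
    (hdescent : ∀ θ₁ θ₂, f θ₁ - f θ₂ ≤ ⟪gradient f θ₂, θ₁ - θ₂⟫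
      + H / (α + 1) * ‖θ₁ - θ₂‖ ^ (α + 1))
    (ηt : ℝ) (hηt : 0 < ηt) (hηle : ηt ≤ (1 / H) ^ (1 / α))
    (θt b θt1 : EuclideanSpace ℝ (Fin p))
    (hstep : θt1 = θt - ηt • (gradient f θt + b)) :
    f θt1 - f θt ≤ -(ηt / 4) * ‖gradient f θt‖ ^ 2 - μ * ηt * (f θt - f θs)
      + H * ηt ^ (α + 1) * (1 - α) / (2 * (α + 1))
      + ηt * G' * ‖b‖ + ηt / 2 * ‖b‖ ^ 2 := by
  have hα0 : (0:ℝ) < α + 1 := by linarith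
  set g := gradient f θt with hg
  -- step size condition
  have hHle : H * ηt ^ (α + 1) ≤ ηt := by
    have h1 : ηt ^ α ≤ 1 / H := by
      have h2 := Real.rpow_le_rpow hηt.le hηle hα.le
      rwa [← Real.rpow_mul (by positivity), one_div_mul_cancel hα.ne',
        Real.rpow_one] at h2
    have h3 : ηt ^ (α + 1) = ηt ^ α * ηt := by
      rw [Real.rpow_add hηt, Real.rpow_one]
    rw [h3]
    calc H * (ηt ^ α * ηt) ≤ H * ((1 / H) * ηt) := by
          apply mul_le_mul_of_nonneg_left _ hH.le
          exact mul_le_mul_of_nonneg_right h1 hηt.le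
      _ = ηt := by field_simp
  -- Young's inequality
  have hyoung : ∀ u : ℝ, 0 ≤ u → u ^ (α + 1) ≤ (1 - α) / 2 + (α + 1) / 2 * u ^ 2 := by
    intro u hu
    have hgm := Real.geom_mean_le_arith_mean2_weighted
      (by linarith : (0:ℝ) ≤ (1 - α) / 2) (by linarith : (0:ℝ) ≤ (α + 1) / 2)
      (zero_le_one) (sq_nonneg u) (by ring)
    have hrw : ((u ^ 2 : ℝ)) ^ ((α + 1) / 2) = u ^ (α + 1) := by
      rw [← Real.rpow_natCast u 2, ← Real.rpow_mul hu]
      congr 1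
      ring
    rw [Real.one_rpow, one_mul, hrw] at hgm
    linarith [hgm]
  have hd : θt1 - θt = -(ηt • (g + b)) := by rw [hstep]; abel
  have hnd : ‖θt1 - θt‖ = ηt * ‖g + b‖ := by
    rw [hd, norm_neg, norm_smul, Real.norm_eq_abs, abs_of_pos hηt]
  have hinner : ⟪g, θt1 - θt⟫ = -(ηt * (‖g‖ ^ 2 + ⟪g, b⟫)) := by
    rw [hd, inner_neg_right, inner_smul_right, inner_add_right,
      real_inner_self_eq_norm_sq]
  have hS2 : ‖g + b‖ ^ 2 = ‖g‖ ^ 2 + 2 * ⟪g, b⟫ + ‖b‖ ^ 2 := norm_add_sq_real g b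
  have hdesc := hdescent θt1 θt
  have hrpow : ‖θt1 - θt‖ ^ (α + 1) = ηt ^ (α + 1) * ‖g + b‖ ^ (α + 1) := by
    rw [hnd, Real.mul_rpow hηt.le (norm_nonneg _)]
  rw [hinner, hrpow] at hdesc
  have hE : (0:ℝ) ≤ ηt ^ (α + 1) := Real.rpow_nonneg hηt.le _
  have hy := hyoung ‖g + b‖ (norm_nonneg _)
  have hbound : H / (α + 1) * (ηt ^ (α + 1) * ‖g + b‖ ^ (α + 1)) ≤
      H * ηt ^ (α + 1) * (1 - α) / (2 * (α + 1)) +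
      H * ηt ^ (α + 1) / 2 * ‖g + b‖ ^ 2 := by
    have h4 : H / (α + 1) * (ηt ^ (α + 1) * ‖g + b‖ ^ (α + 1)) ≤
        H / (α + 1) * (ηt ^ (α + 1) * ((1 - α) / 2 + (α + 1) / 2 * ‖g + b‖ ^ 2)) := by
      apply mul_le_mul_of_nonneg_left _ (by positivity)
      exact mul_le_mul_of_nonneg_left hy hE
    calc H / (α + 1) * (ηt ^ (α + 1) * ‖g + b‖ ^ (α + 1)) ≤
        H / (α + 1) * (ηt ^ (α + 1) * ((1 - α) / 2 + (α + 1) / 2 * ‖g + b‖ ^ 2)) := h4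
      _ = H * ηt ^ (α + 1) * (1 - α) / (2 * (α + 1)) +
          H * ηt ^ (α + 1) / 2 * ‖g + b‖ ^ 2 := by field_simp
  have hsq : H * ηt ^ (α + 1) / 2 * ‖g + b‖ ^ 2 ≤ ηt / 2 * ‖g + b‖ ^ 2 := by
    apply mul_le_mul_of_nonneg_right _ (sq_nonneg _)
    linarith
  have hPLt := hPL θt
  have hPLη : ηt * (4 * μ * (f θt - f θs)) ≤ ηt * ‖g‖ ^ 2 :=
    mul_le_mul_of_nonneg_left hPLt hηt.le
  have hGb : 0 ≤ ηt * G' * ‖b‖ := by positivity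
  nlinarith [hdesc, hbound, hsq, hPLη, hGb, hS2]
end

section
/- Let X₁,...,X_n be independent, zero-mean, and bounded |X_i| ≤ M almost surely. Then for every q ≥ 2, the L^q norm satisfies ||X₁ + ... + X_n||_q ≤ 6 sqrt(q · Σᵢ E[Xᵢ²]) + 4qM. -/
/-!
On `[-1, 1]` we have `exp x ≤ 1 + x + x²`, so a centred variable with `|Y| ≤ M` satisfies
`E exp (t Y) ≤ 1 + t² E Y² ≤ exp (t² E Y²)` for `|t| M ≤ 1`; by independence the sum `S`
has `E exp (t S) ≤ exp (t² v)` with `v = ∑ E Xᵢ²`. Bounding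
`|s|^q ≤ (q / (e l))^q (e^{l s} + e^{-l s})` gives `‖S‖_q ≤ 2 q / l` as soon as `l M ≤ 1`
and `l² v ≤ q`, and letting `1 / l` decrease to `max M (√(q v) / q)` yields
`‖S‖_q ≤ 2 (√(q v) + q M)`.
-/

open MeasureTheory ProbabilityTheory Real

lemma Real.exp_le_one_add_add_sq {x : ℝ} (hx : |x| ≤ 1) : exp x ≤ 1 + x + x ^ 2 := by
  linarith [(abs_le.1 (abs_exp_sub_one_sub_id_le hx)).2]

lemma Real.rpow_le_mul_exp {q l x : ℝ} (hq : 0 < q) (hl : 0 < l) (hx : 0 ≤ x) :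
    x ^ q ≤ (q / (exp 1 * l)) ^ q * exp (l * x) := by
  -- `y ≤ exp (y - 1)` at `y = l x / q`, raised to the power `q`
  have hy : l * x / q ≤ exp (l * x / q - 1) := by linarith [add_one_le_exp (l * x / q - 1)]
  calc x ^ q = (q / l) ^ q * (l * x / q) ^ q := by
        rw [← mul_rpow (by positivity) (by positivity)]
        congr 1
        field_simp
    _ ≤ (q / l) ^ q * exp (l * x / q - 1) ^ q := by gcongr
    _ = (q / (exp 1 * l)) ^ q * exp (l * x) := by
        rw [← exp_mul, sub_mul, div_mul_cancel₀ _ hq.ne', one_mul, exp_sub, mul_comm (exp 1),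
          ← div_div, div_rpow (by positivity) (exp_pos 1).le, exp_one_rpow]
        ring

namespace ProbabilityTheory

section Moments

variable {Ω : Type*} [MeasurableSpace Ω] {μ : Measure Ω} {Z : Ω → ℝ} {q l : ℝ}

lemma integral_abs_rpow_le_mgf_add_mgf (hq : 0 < q) (hl : 0 < l)
    (hpos : Integrable (fun ω => exp (l * Z ω)) μ)
    (hneg : Integrable (fun ω => exp (-l * Z ω)) μ) :
    ∫ ω, |Z ω| ^ q ∂μ ≤ (q / (exp 1 * l)) ^ q * (mgf Z μ l + mgf Z μ (-l)) := by
  rw [mgf, mgf, ← integral_add hpos hneg, ← integral_const_mul]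
  refine integral_mono_of_nonneg (ae_of_all _ fun ω => by positivity)
    ((hpos.add hneg).const_mul _) (ae_of_all _ fun ω => ?_)
  have hexp : exp (l * |Z ω|) ≤ exp (l * Z ω) + exp (-l * Z ω) := by
    rcases abs_cases (Z ω) with ⟨h, -⟩ | ⟨h, -⟩
    · rw [h]; exact le_add_of_nonneg_right (exp_pos _).le
    · rw [h, mul_neg, ← neg_mul]; exact le_add_of_nonneg_left (exp_pos _).le
  exact (rpow_le_mul_exp hq hl (abs_nonneg _)).trans
    (mul_le_mul_of_nonneg_left hexp (by positivity))

lemma rpow_integral_abs_rpow_le_of_mgf_le {v : ℝ} (hq : 1 ≤ q) (hl : 0 < l)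
    (hlv : l ^ 2 * v ≤ q)
    (hpos : Integrable (fun ω => exp (l * Z ω)) μ)
    (hneg : Integrable (fun ω => exp (-l * Z ω)) μ)
    (hmgf_pos : mgf Z μ l ≤ exp (l ^ 2 * v)) (hmgf_neg : mgf Z μ (-l) ≤ exp (l ^ 2 * v)) :
    (∫ ω, |Z ω| ^ q ∂μ) ^ (1 / q) ≤ 2 * q / l := by
  have hq0 : 0 < q := by linarith
  have hmoment : ∫ ω, |Z ω| ^ q ∂μ ≤ 2 * (q / l) ^ q := by
    have hexp : exp (l ^ 2 * v) ≤ exp q := exp_le_exp.2 hlv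
    calc ∫ ω, |Z ω| ^ q ∂μ ≤ (q / (exp 1 * l)) ^ q * (mgf Z μ l + mgf Z μ (-l)) :=
          integral_abs_rpow_le_mgf_add_mgf hq0 hl hpos hneg
      _ ≤ (q / (exp 1 * l)) ^ q * (2 * exp q) := by gcongr; linarith
      _ = 2 * (q / l) ^ q := by
          rw [mul_comm (exp 1), ← div_div, div_rpow (by positivity) (exp_pos 1).le,
            exp_one_rpow]
          field_simp
  calc (∫ ω, |Z ω| ^ q ∂μ) ^ (1 / q) ≤ (2 * (q / l) ^ q) ^ (1 / q) :=
        rpow_le_rpow (integral_nonneg fun ω => by positivity) hmoment (by positivity)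
    _ = 2 ^ (1 / q) * (q / l) := by
        rw [mul_rpow zero_le_two (by positivity), ← rpow_mul (by positivity),
          mul_one_div_cancel hq0.ne', rpow_one]
    _ ≤ 2 * (q / l) := by
        gcongr
        exact rpow_le_self_of_one_le one_le_two ((div_le_one hq0).2 hq)
    _ = 2 * q / l := by ring

end Moments

section Bernstein

variable {Ω : Type*} [MeasurableSpace Ω] {μ : Measure Ω} [IsProbabilityMeasure μ] {M t : ℝ}

lemma mgf_le_exp_mul_integral_sq {Y : Ω → ℝ} (hY : AEMeasurable Y μ)
    (hmean : ∫ ω, Y ω ∂μ = 0) (hb : ∀ᵐ ω ∂μ, |Y ω| ≤ M) (ht : |t| * M ≤ 1) :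
    mgf Y μ t ≤ exp (t ^ 2 * ∫ ω, Y ω ^ 2 ∂μ) := by
  have hIcc : ∀ᵐ ω ∂μ, Y ω ∈ Set.Icc (-M) M := hb.mono fun ω h => abs_le.1 h
  have hY1 : Integrable Y μ := .of_mem_Icc _ _ hY hIcc
  have hY2 : Integrable (fun ω => Y ω ^ 2) μ := by
    refine .of_mem_Icc 0 (M ^ 2) (hY.pow_const 2) (hb.mono fun ω h => ⟨sq_nonneg _, ?_⟩)
    rw [← sq_abs]
    exact pow_le_pow_left₀ (abs_nonneg _) h 2
  have hlin : Integrable (fun ω => 1 + t * Y ω) μ := (integrable_const 1).add (hY1.const_mul t)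
  have hquad : Integrable (fun ω => t ^ 2 * Y ω ^ 2) μ := hY2.const_mul _
  calc mgf Y μ t ≤ ∫ ω, (1 + t * Y ω + t ^ 2 * Y ω ^ 2) ∂μ := by
        refine integral_mono_ae (integrable_exp_mul_of_mem_Icc hY hIcc) (hlin.add hquad) ?_
        filter_upwards [hb] with ω h
        have htY : |t * Y ω| ≤ 1 := by rw [abs_mul]; exact le_trans (by gcongr) ht
        linarith [exp_le_one_add_add_sq htY, mul_pow t (Y ω) 2]
    _ = 1 + t ^ 2 * ∫ ω, Y ω ^ 2 ∂μ := by
        rw [integral_add hlin hquad, integral_add (integrable_const 1) (hY1.const_mul t),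
          integral_const_mul, integral_const_mul, hmean]
        simp
    _ ≤ exp (t ^ 2 * ∫ ω, Y ω ^ 2 ∂μ) := by
        linarith [add_one_le_exp (t ^ 2 * ∫ ω, Y ω ^ 2 ∂μ)]

lemma iIndepFun.mgf_sum_le_exp {ι : Type*} {X : ι → Ω → ℝ} (hindep : iIndepFun X μ)
    (hmeas : ∀ i, AEMeasurable (X i) μ) (hmean : ∀ i, ∫ ω, X i ω ∂μ = 0)
    (hb : ∀ i, ∀ᵐ ω ∂μ, |X i ω| ≤ M) (ht : |t| * M ≤ 1) (s : Finset ι) :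
    mgf (∑ i ∈ s, X i) μ t ≤ exp (t ^ 2 * ∑ i ∈ s, ∫ ω, X i ω ^ 2 ∂μ) := by
  rw [hindep.mgf_sum₀ hmeas, Finset.mul_sum, exp_sum]
  exact Finset.prod_le_prod (fun i _ => mgf_nonneg)
    fun i _ => mgf_le_exp_mul_integral_sq (hmeas i) (hmean i) (hb i) ht

end Bernstein

end ProbabilityTheory

lemma le_mul_sqrt_mul_add_mul_of_forall_le_div {A c q v M : ℝ} (hc : 0 < c) (hq : 0 < q)
    (hM : 0 ≤ M) (h : ∀ l > 0, l * M ≤ 1 → l ^ 2 * v ≤ q → A ≤ c * q / l) :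
    A ≤ c * (√(q * v) + q * M) := by
  have hmax : A / (c * q) ≤ max M (√(q * v) / q) := by
    refine le_of_forall_gt_imp_ge_of_dense fun u hu => ?_
    have hu0 : 0 < u := lt_of_le_of_lt (le_max_of_le_right (by positivity)) hu
    have hMu : M < u := lt_of_le_of_lt (le_max_left _ _) hu
    have hvu : √(q * v) < q * u := by
      rw [← div_lt_iff₀' hq]; exact lt_of_le_of_lt (le_max_right _ _) hu
    have hlv : u⁻¹ ^ 2 * v ≤ q := by
      have := (sqrt_lt' (by positivity)).1 hvu
      rw [inv_pow, inv_mul_le_iff₀ (by positivity)]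
      nlinarith
    have := h u⁻¹ (inv_pos.2 hu0) (by rw [inv_mul_le_iff₀ hu0]; linarith) hlv
    rw [div_le_iff₀ (by positivity)]
    calc A ≤ c * q / u⁻¹ := this
      _ = u * (c * q) := by field_simp
  calc A ≤ c * q * max M (√(q * v) / q) := by rwa [div_le_iff₀' (by positivity)] at hmax
    _ ≤ c * q * (M + √(q * v) / q) := by
        gcongr; exact max_le_add_of_nonneg hM (by positivity)
    _ = c * (√(q * v) + q * M) := by field_simp; ring

theorem stmt_19 {n : ℕ} {Ω : Type*} [MeasureSpace Ω]
    [IsProbabilityMeasure (ℙ : Measure Ω)]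
    (X : Fin n → Ω → ℝ) (M : ℝ) (hM : 0 ≤ M)
    (hmeas : ∀ i, Measurable (X i))
    (hindep : iIndepFun X ℙ)
    (hmean : ∀ i, ∫ ω, X i ω ∂ℙ = 0)
    (hbound : ∀ i, ∀ᵐ ω ∂ℙ, |X i ω| ≤ M)
    (q : ℝ) (hq : 2 ≤ q) :
    (∫ ω, |∑ i, X i ω| ^ q ∂ℙ) ^ (1 / q)
      ≤ 6 * Real.sqrt (q * ∑ i, ∫ ω, (X i ω) ^ 2 ∂ℙ) + 4 * q * M := by
  have hq0 : 0 < q := by linarith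
  have hint : ∀ t, Integrable (fun ω => exp (t * (∑ i, X i) ω)) ℙ := fun t =>
    hindep.integrable_exp_mul_sum hmeas fun i _ =>
      integrable_exp_mul_of_mem_Icc (hmeas i).aemeasurable ((hbound i).mono fun ω h => abs_le.1 h)
  have hmgf : ∀ t, |t| * M ≤ 1 →
      mgf (∑ i, X i) ℙ t ≤ exp (t ^ 2 * ∑ i, ∫ ω, X i ω ^ 2 ∂ℙ) := fun t ht =>
    hindep.mgf_sum_le_exp (fun i => (hmeas i).aemeasurable) hmean hbound ht _
  have hmoment : ∀ l > 0, l * M ≤ 1 → l ^ 2 * (∑ i, ∫ ω, X i ω ^ 2 ∂ℙ) ≤ q →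
      (∫ ω, |∑ i, X i ω| ^ q ∂ℙ) ^ (1 / q) ≤ 2 * q / l := by
    intro l hl hlM hlv
    have hmgf_neg := hmgf (-l) (by rwa [abs_neg, abs_of_pos hl])
    rw [neg_sq] at hmgf_neg
    have := rpow_integral_abs_rpow_le_of_mgf_le (by linarith) hl hlv (hint l) (hint (-l))
      (hmgf l (by rwa [abs_of_pos hl])) hmgf_neg
    simpa only [Finset.sum_apply] using this
  calc _ ≤ 2 * (√(q * ∑ i, ∫ ω, X i ω ^ 2 ∂ℙ) + q * M) :=
        le_mul_sqrt_mul_add_mul_of_forall_le_div two_pos hq0 hM hmoment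
    _ ≤ 6 * √(q * ∑ i, ∫ ω, X i ω ^ 2 ∂ℙ) + 4 * q * M := by
        nlinarith [sqrt_nonneg (q * ∑ i, ∫ ω, X i ω ^ 2 ∂ℙ), mul_nonneg hq0.le hM]
end
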